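/- Let R₁, ..., R_{n−1} be invertible operators on a vector space satisfying the braid relations R_i R_{i+1} R_i = R_{i+1} R_i R_{i+1} and R_i R_j = R_j R_i for |i−j| > 1. Fix 1 ≤ k ≤ m ≤ n−1 and define U_k = R_m R_{m−1} ⋯ R_{k+1} R_k² R_{k+1}⁻¹ ⋯ R_{m−1}⁻¹ R_m⁻¹. Then for all 1 ≤ k < l ≤ m, [U_k, R_{m+1}⁻¹ U_l R_{m+1}] = 0 when the braid relations among R_k, ..., R_{m+1} hold. -/

import Mathlib

/-- `conjChain R k m = R m * R (m-1) * ⋯ * R (k+1)` in the group `G`. -/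
def conjChain {G : Type*} [Group G] (R : ℕ → G) (k m : ℕ) : G :=
  (((List.Ico (k + 1) (m + 1)).reverse.map R).prod)

section Aux

variable {G : Type*} [Group G]

lemma conjChain_self (R : ℕ → G) (k : ℕ) : conjChain R k k = 1 := by
  simp [conjChain]

lemma conjChain_succ (R : ℕ → G) {k m : ℕ} (h : k ≤ m) :
    conjChain R k (m + 1) = R (m + 1) * conjChain R k m := by
  unfold conjChain
  rw [List.Ico.succ_top (by omega : k + 1 ≤ m + 1)]
  simp

lemma commute_conjChain {R : ℕ → G} {b : G} {k m : ℕ}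
    (h : ∀ i, k + 1 ≤ i → i < m + 1 → Commute b (R i)) :
    Commute b (conjChain R k m) := by
  unfold conjChain
  apply Commute.list_prod_right
  intro x hx
  simp only [List.mem_map, List.mem_reverse, List.Ico.mem] at hx
  obtain ⟨i, ⟨h1, h2⟩, rfl⟩ := hx
  exact h i h1 h2

lemma commute_conj {x y : G} (h : G) (hxy : Commute x y) :
    Commute (h * x * h⁻¹) (h * y * h⁻¹) := by
  unfold Commute SemiconjBy at *
  calc h * x * h⁻¹ * (h * y * h⁻¹) = h * (x * y) * h⁻¹ := by group
    _ = h * (y * x) * h⁻¹ := by rw [hxy]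
    _ = h * y * h⁻¹ * (h * x * h⁻¹) := by group

lemma gdaha_key (m : ℕ) (R : ℕ → G)
    (hbraid : ∀ i, 1 ≤ i → i ≤ m → R i * R (i + 1) * R i = R (i + 1) * R i * R (i + 1))
    (hcomm : ∀ i j, 1 ≤ i → 1 ≤ j → i ≤ m + 1 → j ≤ m + 1 → i + 1 < j →
      Commute (R i) (R j)) :
    ∀ k l, 1 ≤ k → k < l → l ≤ m →
      Commute (conjChain R k m * (R k) ^ 2 * (conjChain R k m)⁻¹)
        ((R (m + 1))⁻¹ * (conjChain R l m * (R l) ^ 2 * (conjChain R l m)⁻¹) * R (m + 1)) := by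
  induction m with
  | zero => intro k l hk hkl hlm; omega
  | succ n ih =>
    intro k l hk hkl hlm
    set a := R (n + 1) with ha
    set b := R (n + 2) with hb
    have hab : a * b * a = b * a * b := hbraid (n + 1) (by omega) le_rfl
    have hconj : b⁻¹ * a * b = a * b * a⁻¹ := by
      calc b⁻¹ * a * b = b⁻¹ * (a * b * a) * a⁻¹ := by group
        _ = b⁻¹ * (b * a * b) * a⁻¹ := by rw [hab]
        _ = a * b * a⁻¹ := by group
    -- commutation of b with everything of index ≤ n
    have hbR : ∀ i, 1 ≤ i → i ≤ n → Commute b (R i) := by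
      intro i h1 h2
      exact (hcomm i (n + 2) h1 (by omega) (by omega) le_rfl (by omega)).symm
    have hbV : ∀ j, 1 ≤ j → j ≤ n →
        Commute b (conjChain R j n * (R j) ^ 2 * (conjChain R j n)⁻¹) := by
      intro j h1 h2
      have hc : Commute b (conjChain R j n) :=
        commute_conjChain (fun i hi1 hi2 => hbR i (by omega) (by omega))
      exact (hc.mul_right ((hbR j h1 h2).pow_right 2)).mul_right hc.inv_right
    have hkn : k ≤ n := by omega
    rcases Nat.lt_succ_iff_lt_or_eq.mp (Nat.lt_succ_of_le hlm) with hln | hleq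
    · -- case l ≤ n : use the induction hypothesis
      have hln' : l ≤ n := by omega
      have IH := ih (fun i h1 h2 => hbraid i h1 (by omega))
        (fun i j h1 h2 h3 h4 h5 => hcomm i j h1 h2 (by omega) (by omega) h5)
        k l hk hkl hln'
      set Vk := conjChain R k n * (R k) ^ 2 * (conjChain R k n)⁻¹ with hVk
      set Vl := conjChain R l n * (R l) ^ 2 * (conjChain R l n)⁻¹ with hVl
      have hUk : conjChain R k (n + 1) * (R k) ^ 2 * (conjChain R k (n + 1))⁻¹
          = a * Vk * a⁻¹ := by
        rw [conjChain_succ R hkn, hVk, ← ha]; group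
      have hUl : conjChain R l (n + 1) * (R l) ^ 2 * (conjChain R l (n + 1))⁻¹
          = a * Vl * a⁻¹ := by
        rw [conjChain_succ R hln', hVl, ← ha]; group
      rw [hUk, hUl]
      have hbVl : Commute b Vl := hbV l (by omega) hln'
      have hbVk : Commute b Vk := hbV k hk hkn
      have hstep : b⁻¹ * (a * Vl * a⁻¹) * b
          = a * (b * (a⁻¹ * Vl * a) * b⁻¹) * a⁻¹ := by
        calc b⁻¹ * (a * Vl * a⁻¹) * b
            = (b⁻¹ * a * b) * (b⁻¹ * Vl * b) * (b⁻¹ * a * b)⁻¹ := by group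
          _ = (b⁻¹ * a * b) * Vl * (b⁻¹ * a * b)⁻¹ := by
              rw [show b⁻¹ * Vl * b = Vl by rw [hbVl.inv_left.eq]; group]
          _ = (a * b * a⁻¹) * Vl * (a * b * a⁻¹)⁻¹ := by rw [hconj]
          _ = a * (b * (a⁻¹ * Vl * a) * b⁻¹) * a⁻¹ := by group
      rw [hstep]
      apply commute_conj a
      have h2 : Commute (b * Vk * b⁻¹) (b * (a⁻¹ * Vl * a) * b⁻¹) :=
        commute_conj b IH
      rwa [show b * Vk * b⁻¹ = Vk by rw [hbVk.eq]; group] at h2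
    · -- case l = n + 1
      subst hleq
      set Vk := conjChain R k n * (R k) ^ 2 * (conjChain R k n)⁻¹ with hVk
      have hUk : conjChain R k (n + 1) * (R k) ^ 2 * (conjChain R k (n + 1))⁻¹
          = a * Vk * a⁻¹ := by
        rw [conjChain_succ R hkn, hVk, ← ha]; group
      have hUl : conjChain R (n + 1) (n + 1) * (R (n + 1)) ^ 2
          * (conjChain R (n + 1) (n + 1))⁻¹ = a ^ 2 := by
        rw [conjChain_self, ← ha]; group
      rw [hUk, hUl]
      have hstep : b⁻¹ * a ^ 2 * b = a * b ^ 2 * a⁻¹ := by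
        calc b⁻¹ * a ^ 2 * b = (b⁻¹ * a * b) * (b⁻¹ * a * b) := by rw [sq]; group
          _ = (a * b * a⁻¹) * (a * b * a⁻¹) := by rw [hconj]
          _ = a * b ^ 2 * a⁻¹ := by rw [sq]; group
      rw [hstep]
      apply commute_conj a
      have hbVk : Commute b Vk := hbV k hk hkn
      exact (hbVk.symm.pow_right 2)

end Aux

theorem gdaha_relation_six (V : Type*) [AddCommGroup V] [Module ℂ V] (m : ℕ)
    (R : ℕ → (Module.End ℂ V)ˣ)
    (hbraid : ∀ i, 1 ≤ i → i ≤ m → R i * R (i + 1) * R i = R (i + 1) * R i * R (i + 1))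
    (hcomm : ∀ i j, 1 ≤ i → 1 ≤ j → i ≤ m + 1 → j ≤ m + 1 → i + 1 < j →
      R i * R j = R j * R i)
    (U : ℕ → (Module.End ℂ V)ˣ)
    (hU : ∀ k, U k = conjChain R k m * (R k) ^ 2 * (conjChain R k m)⁻¹) :
    ∀ k l, 1 ≤ k → k < l → l ≤ m →
      U k * ((R (m + 1))⁻¹ * U l * R (m + 1)) =
        ((R (m + 1))⁻¹ * U l * R (m + 1)) * U k := by
  intro k l hk hkl hlm
  rw [hU k, hU l]
  exact gdaha_key m R hbraid hcomm k l hk hkl hlm
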